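/- Let d be a natural number and c a real number. Then Σ_{k=1}^∞ Σ_{k'=1}^∞ (1/(k·k')) · ∫₀¹ ∫₀¹ x^k y^{k'} (x·y + c)^d dx dy = Σ_{i=0}^{d} C(d, i) · c^{d−i} · ( H_{i+1} / (i+1) )², with the left-hand double series converging, where C(d,i) is the binomial coefficient and H_n = Σ_{j=1}^{n} 1/j is the n-th harmonic number. -/

import Mathlib

open Finset Filter Topology intervalIntegral

/- Expanding `(x y + c)^d` binomially turns the double integral into
`∑ᵢ C(d,i) c^(d-i) / ((k+i+2)(k'+i+2))`, so the weighted double series splits into `d + 1` products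
`(∑ₖ bᵢ(k))²` with `bᵢ(k) = 1/((k+1)(k+i+2)) = (1/(k+1) - 1/(k+i+2))/(i+1)`; this series telescopes
to `H_{i+1}/(i+1)`. All terms `bᵢ(k) bᵢ(k')` are nonnegative, which gives the unconditional
convergence over `ℕ × ℕ`. -/

/-- Antitonicity makes the terms nonnegative, which is what turns convergence of the partial sums
into (unconditional) summability. -/
theorem hasSum_sub_add_of_antitone {f : ℕ → ℝ} (hf : Antitone f) (hf0 : Tendsto f atTop (𝓝 0))
    (n : ℕ) : HasSum (fun k => f k - f (k + n)) (∑ j ∈ range n, f j) := by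
  set F : ℕ → ℝ := fun k => ∑ j ∈ range n, f (k + j)
  have hF : ∀ k, f k - f (k + n) = F k - F (k + 1) := fun k => by
    have h := (sum_range_succ (fun j => f (k + j)) n).symm.trans (sum_range_succ' _ n)
    simp only [F]
    ring_nf at h ⊢
    linarith
  have hF0 : Tendsto F atTop (𝓝 0) := by
    simpa using tendsto_finsetSum (range n) fun j _ => hf0.comp (tendsto_add_atTop_nat j)
  rw [hasSum_iff_tendsto_nat_of_nonneg fun k => sub_nonneg.2 (hf (Nat.le_add_right k n))]
  simp only [hF, sum_range_sub']
  simpa [F] using tendsto_const_nhds.sub hF0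

theorem HasSum.mul_of_nonneg {ι ι' : Type*} {f : ι → ℝ} {g : ι' → ℝ} {a b : ℝ}
    (hf : HasSum f a) (hg : HasSum g b) (hf' : 0 ≤ f) (hg' : 0 ≤ g) :
    HasSum (fun x : ι × ι' => f x.1 * g x.2) (a * b) :=
  hf.mul hg (hf.summable.mul_of_nonneg hg.summable hf' hg')

theorem hasSum_one_div_succ_mul_add_two (i : ℕ) :
    HasSum (fun k : ℕ => 1 / (((k : ℝ) + 1) * ((k : ℝ) + i + 2)))
      ((∑ j ∈ range (i + 1), 1 / ((j : ℝ) + 1)) / ((i : ℝ) + 1)) := by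
  have hanti : Antitone fun k : ℕ => 1 / ((k : ℝ) + 1) := fun a b hab =>
    one_div_le_one_div_of_le (by positivity) (by gcongr)
  refine ((hasSum_sub_add_of_antitone hanti tendsto_one_div_add_atTop_nhds_zero_nat
    (i + 1)).div_const ((i : ℝ) + 1)).congr_fun fun k => ?_
  push_cast
  field_simp
  ring

theorem integral_zero_one_sum_mul_pow {ι : Type*} (s : Finset ι) (a : ι → ℝ) (e : ι → ℕ) :
    ∫ x in (0 : ℝ)..1, ∑ i ∈ s, a i * x ^ e i = ∑ i ∈ s, a i / ((e i : ℝ) + 1) := by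
  rw [integral_finsetSum fun i _ =>
    (by fun_prop : Continuous fun x : ℝ => a i * x ^ e i).intervalIntegrable 0 1]
  refine sum_congr rfl fun i _ => ?_
  simp [integral_pow, div_eq_mul_inv]

theorem integral_integral_pow_mul_pow_mul_add_pow (m n d : ℕ) (c : ℝ) :
    ∫ y in (0 : ℝ)..1, ∫ x in (0 : ℝ)..1, x ^ m * y ^ n * (x * y + c) ^ d =
      ∑ i ∈ range (d + 1),
        (d.choose i : ℝ) * c ^ (d - i) / (((m + i : ℕ) : ℝ) + 1) / (((n + i : ℕ) : ℝ) + 1) := by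
  have hexpand : ∀ x y : ℝ, x ^ m * y ^ n * (x * y + c) ^ d =
      ∑ i ∈ range (d + 1), (d.choose i * c ^ (d - i) * y ^ (n + i)) * x ^ (m + i) := by
    intro x y
    rw [add_pow, mul_sum]
    refine sum_congr rfl fun i _ => ?_
    ring
  have hinner : ∀ y : ℝ, ∫ x in (0 : ℝ)..1, x ^ m * y ^ n * (x * y + c) ^ d =
      ∑ i ∈ range (d + 1), (d.choose i * c ^ (d - i) / (((m + i : ℕ) : ℝ) + 1)) * y ^ (n + i) := by
    intro y
    simp only [hexpand, integral_zero_one_sum_mul_pow]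
    refine sum_congr rfl fun i _ => ?_
    ring
  simp only [hinner, integral_zero_one_sum_mul_pow]

theorem one_div_mul_integral_integral_eq_sum (d : ℕ) (c : ℝ) (k k' : ℕ) :
    1 / (((k : ℝ) + 1) * ((k' : ℝ) + 1)) *
        ∫ y in (0 : ℝ)..1, ∫ x in (0 : ℝ)..1, x ^ (k + 1) * y ^ (k' + 1) * (x * y + c) ^ d =
      ∑ i ∈ range (d + 1), (d.choose i : ℝ) * c ^ (d - i) *
        (1 / (((k : ℝ) + 1) * ((k : ℝ) + i + 2)) * (1 / (((k' : ℝ) + 1) * ((k' : ℝ) + i + 2)))) := by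
  rw [integral_integral_pow_mul_pow_mul_add_pow, mul_sum]
  refine sum_congr rfl fun i _ => ?_
  push_cast
  field_simp
  ring

/-- Prior variance term of the infinite weighted sum of raw moments under the polynomial
kernel: `∑_{k,k' ≥ 1} (1/(k k')) ∫₀¹∫₀¹ x^k y^{k'} (xy+c)^d dx dy
  = ∑_{i=0}^d C(d,i) c^{d-i} (H_{i+1}/(i+1))²`. -/
theorem polynomial_kernel_double_tsum_moment_integral (d : ℕ) (c : ℝ) :
    Summable (fun p : ℕ × ℕ => (1 / (((p.1 : ℝ) + 1) * ((p.2 : ℝ) + 1))) *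
      ∫ y in (0 : ℝ)..1, ∫ x in (0 : ℝ)..1,
        x ^ (p.1 + 1) * y ^ (p.2 + 1) * (x * y + c) ^ d) ∧
    ∑' p : ℕ × ℕ, (1 / (((p.1 : ℝ) + 1) * ((p.2 : ℝ) + 1))) *
      ∫ y in (0 : ℝ)..1, ∫ x in (0 : ℝ)..1,
        x ^ (p.1 + 1) * y ^ (p.2 + 1) * (x * y + c) ^ d =
      ∑ i ∈ Finset.range (d + 1),
        (d.choose i : ℝ) * c ^ (d - i) *
          ((∑ j ∈ Finset.range (i + 1), 1 / ((j : ℝ) + 1)) / ((i : ℝ) + 1)) ^ 2 := by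
  have hnonneg (i : ℕ) : 0 ≤ fun k : ℕ => 1 / (((k : ℝ) + 1) * ((k : ℝ) + i + 2)) :=
    fun k => by positivity
  have h := hasSum_sum fun i (_ : i ∈ range (d + 1)) =>
    ((hasSum_one_div_succ_mul_add_two i).mul_of_nonneg (hasSum_one_div_succ_mul_add_two i)
      (hnonneg i) (hnonneg i)).mul_left ((d.choose i : ℝ) * c ^ (d - i))
  simp only [← sq] at h
  simp only [one_div_mul_integral_integral_eq_sum]
  exact ⟨h.summable, h.tsum_eq⟩
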